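/- Let 1 ≤ k ≤ d-1, let ρ ∈ (0,1), and let S be a collection of spherical caps on S^{d-1} of radius ρ^d/(1000d) (boundedly overlapping). Then at least one of the following holds: (I) there exist τ_1, …, τ_{k+1} ∈ S such that |u_1 ∧ ⋯ ∧ u_{k+1}| ≥ ρ^k/2 for all choices u_j ∈ τ_j; or (II) there exists a k-dimensional linear subspace H ⊆ ℝ^d such that at least half the caps τ ∈ S are contained in the ρ-neighborhood N_ρ(H) of H. -/

import Mathlib

/-!
Greedy selection of cap centres. Appending a vector `x` to a family `w` multiplies its Gram
volume by `dist(x, span w)`; hence the Gram volume of unit vectors is `1`-Lipschitz in each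
vector, and moving `k + 1` unit vectors by at most `r` changes it by at most `(k + 1) r`.
Choose centres one at a time, each at distance `> ρ - r` from the span of the previous ones.
If at some stage at least half of the centres lie within `ρ - r` of that span (of dimension
at most `k`), every `k`-plane containing it has all their caps in its `ρ`-neighbourhood.
Otherwise we obtain `k + 1` centres of Gram volume at least `(ρ - r) ^ k`, and for
`r = ρ ^ d / (1000 d)` every choice of points in their caps keeps the volume above `ρ ^ k / 2`.
-/

open Metric Set
open scoped RealInnerProductSpace

/-- `|u_1 ∧ ⋯ ∧ u_m|`: the volume of the parallelepiped spanned by `u_1,…,u_m`,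
i.e. the square root of the Gram determinant. -/
noncomputable def gramVol {d m : ℕ} (u : Fin m → EuclideanSpace ℝ (Fin d)) : ℝ :=
  Real.sqrt (Matrix.det (Matrix.of fun i j => (⟪u i, u j⟫ : ℝ)))

/-- The spherical cap of radius `r` centered at `e`. -/
def sphCap {d : ℕ} (e : EuclideanSpace ℝ (Fin d)) (r : ℝ) : Set (EuclideanSpace ℝ (Fin d)) :=
  {u | ‖u‖ = 1 ∧ ‖u - e‖ ≤ r}

section Gram

variable {E : Type*} [NormedAddCommGroup E] [InnerProductSpace ℝ E]

theorem Submodule.infDist_eq_norm_sub_starProjection (K : Submodule ℝ E)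
    [K.HasOrthogonalProjection] (x : E) : infDist x K = ‖x - K.starProjection x‖ := by
  rw [starProjection_minimal, infDist_eq_iInf]
  simp only [dist_eq_norm]
  rfl

namespace Matrix

theorem det_eq_mul_det_submatrix_castSucc {R : Type*} [CommRing R] {n : ℕ}
    (A : Matrix (Fin (n + 1)) (Fin (n + 1)) R) (h : ∀ i : Fin n, A i.castSucc (Fin.last n) = 0) :
    A.det = A (Fin.last n) (Fin.last n) * (A.submatrix Fin.castSucc Fin.castSucc).det := by
  rw [det_succ_column _ (Fin.last n), Finset.sum_eq_single (Fin.last n)]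
  · simp [← two_mul, pow_mul, Fin.succAbove_last]
  · intro i _ hi
    obtain ⟨i, rfl⟩ := Fin.exists_castSucc_eq.2 hi
    simp [h]
  · simp

theorem gram_sum_smul {m n : Type*} [Fintype m] [Fintype n] (B : Matrix m n ℝ) (v : n → E) :
    gram ℝ (fun i => ∑ j, B i j • v j) = B * gram ℝ v * Bᵀ := by
  ext i l
  simp only [gram_apply, sum_inner, inner_sum, real_inner_smul_left, real_inner_smul_right,
    mul_apply, transpose_apply, Finset.sum_mul]
  exact Finset.sum_congr rfl fun _ _ => Finset.sum_congr rfl fun _ _ => by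
    rw [real_inner_comm]; ring

theorem det_gram_snoc_of_mem_orthogonal {m : ℕ} (w : Fin m → E) {y : E}
    (hy : y ∈ (Submodule.span ℝ (range w))ᗮ) :
    (gram ℝ (Fin.snoc w y : Fin (m + 1) → E)).det = (gram ℝ w).det * ‖y‖ ^ 2 := by
  have hwy (i : Fin m) : ⟪w i, y⟫ = 0 :=
    Submodule.inner_right_of_mem_orthogonal (Submodule.subset_span (mem_range_self i)) hy
  rw [det_eq_mul_det_submatrix_castSucc _ (by simpa using hwy), mul_comm]
  simp [submatrix, gram]

theorem det_gram_snoc_of_sub_mem_span {m : ℕ} (w : Fin m → E) {x y : E}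
    (hxy : x - y ∈ Submodule.span ℝ (range w)) :
    (gram ℝ (Fin.snoc w x : Fin (m + 1) → E)).det =
      (gram ℝ (Fin.snoc w y : Fin (m + 1) → E)).det := by
  obtain ⟨c, hc⟩ := (Submodule.mem_span_range_iff_exists_fun ℝ).1 hxy
  set B : Matrix (Fin (m + 1)) (Fin (m + 1)) ℝ := updateRow 1 (Fin.last m) (Fin.snoc c 1)
  have hB : B.det = 1 := by
    rw [det_eq_mul_det_submatrix_castSucc]
    · have : B.submatrix Fin.castSucc Fin.castSucc = 1 := by
        ext i j
        simp [B, one_apply, (Fin.castSucc_lt_last i).ne]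
      simp [this, B]
    · simp [B]
  have hx : (Fin.snoc w x : Fin (m + 1) → E) =
      fun i => ∑ j, B i j • (Fin.snoc w y : Fin (m + 1) → E) j := by
    funext i
    refine Fin.lastCases ?_ (fun i => ?_) i
    · simp [B, Fin.sum_univ_castSucc, hc]
    · simp [B, one_apply]
  rw [hx, gram_sum_smul, det_mul, det_mul, det_transpose, hB, one_mul, mul_one]

theorem det_gram_snoc {m : ℕ} (w : Fin m → E) (x : E) :
    (gram ℝ (Fin.snoc w x : Fin (m + 1) → E)).det =
      (gram ℝ w).det * infDist x (Submodule.span ℝ (range w)) ^ 2 := by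
  set K := Submodule.span ℝ (range w)
  have : FiniteDimensional ℝ K := .span_of_finite ℝ (finite_range w)
  have : CompleteSpace K := FiniteDimensional.complete ℝ K
  have hproj : x - (x - K.starProjection x) ∈ K := by
    rw [sub_sub_cancel]
    exact K.starProjection_apply_mem x
  rw [K.infDist_eq_norm_sub_starProjection, det_gram_snoc_of_sub_mem_span w hproj,
    det_gram_snoc_of_mem_orthogonal w (K.sub_starProjection_mem_orthogonal x)]

end Matrix

end Gram

section GramVol

variable {d m : ℕ}

theorem gramVol_eq_sqrt_det_gram (u : Fin m → EuclideanSpace ℝ (Fin d)) :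
    gramVol u = √(Matrix.gram ℝ u).det := rfl

theorem gramVol_nonneg (u : Fin m → EuclideanSpace ℝ (Fin d)) : 0 ≤ gramVol u :=
  Real.sqrt_nonneg _

theorem gramVol_fin_zero (u : Fin 0 → EuclideanSpace ℝ (Fin d)) : gramVol u = 1 := by
  simp [gramVol]

theorem gramVol_snoc (w : Fin m → EuclideanSpace ℝ (Fin d)) (x : EuclideanSpace ℝ (Fin d)) :
    gramVol (Fin.snoc w x : Fin (m + 1) → EuclideanSpace ℝ (Fin d)) =
      gramVol w * infDist x (Submodule.span ℝ (range w)) := by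
  rw [gramVol_eq_sqrt_det_gram, gramVol_eq_sqrt_det_gram, Matrix.det_gram_snoc,
    Real.sqrt_mul (Matrix.posSemidef_gram ℝ w).det_nonneg, Real.sqrt_sq infDist_nonneg]

theorem gramVol_comp_perm (u : Fin m → EuclideanSpace ℝ (Fin d)) (σ : Equiv.Perm (Fin m)) :
    gramVol (u ∘ σ) = gramVol u := by
  rw [gramVol_eq_sqrt_det_gram, gramVol_eq_sqrt_det_gram]
  exact congrArg Real.sqrt (Matrix.det_submatrix_equiv_self σ (Matrix.gram ℝ u))

theorem gramVol_le_one (u : Fin m → EuclideanSpace ℝ (Fin d)) (hu : ∀ i, ‖u i‖ ≤ 1) :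
    gramVol u ≤ 1 := by
  induction m with
  | zero => rw [gramVol_fin_zero]
  | succ n ih =>
    rw [← Fin.snoc_init_self u, gramVol_snoc]
    refine mul_le_one₀ (ih _ fun i => hu _) infDist_nonneg ?_
    calc infDist (u (Fin.last n)) (Submodule.span ℝ (range (Fin.init u)))
        ≤ dist (u (Fin.last n)) 0 := infDist_le_dist_of_mem (Submodule.zero_mem _)
      _ ≤ 1 := by simpa using hu _

theorem abs_gramVol_sub_update_last_le (u : Fin (m + 1) → EuclideanSpace ℝ (Fin d))
    (x : EuclideanSpace ℝ (Fin d)) (hu : ∀ i, ‖u i‖ ≤ 1) :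
    |gramVol u - gramVol (Function.update u (Fin.last m) x)| ≤ ‖u (Fin.last m) - x‖ := by
  set K := Submodule.span ℝ (range (Fin.init u))
  have hu' : gramVol u = gramVol (Fin.init u) * infDist (u (Fin.last m)) K := by
    rw [← gramVol_snoc, Fin.snoc_init_self]
  have hx : gramVol (Function.update u (Fin.last m) x) = gramVol (Fin.init u) * infDist x K := by
    conv_lhs => rw [← Fin.snoc_init_self u, Fin.update_snoc_last]
    exact gramVol_snoc _ _
  rw [hu', hx, ← mul_sub, abs_mul, abs_of_nonneg (gramVol_nonneg _), ← dist_eq_norm]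
  calc _ ≤ 1 * |infDist (u (Fin.last m)) K - infDist x K| := by
        gcongr
        exact gramVol_le_one _ fun i => hu _
    _ ≤ dist (u (Fin.last m)) x := by
        simpa [Real.dist_eq] using (lipschitz_infDist_pt (K : Set _)).dist_le_mul (u _) x

theorem abs_gramVol_sub_update_le (u : Fin m → EuclideanSpace ℝ (Fin d)) (i : Fin m)
    (x : EuclideanSpace ℝ (Fin d)) (hu : ∀ j, ‖u j‖ ≤ 1) :
    |gramVol u - gramVol (Function.update u i x)| ≤ ‖u i - x‖ := by
  obtain _ | n := m
  · exact i.elim0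
  set σ := Equiv.swap i (Fin.last n)
  have hupdate : Function.update u i x ∘ σ = Function.update (u ∘ σ) (Fin.last n) x := by
    rw [Function.update_comp_equiv]
    simp [σ]
  have hlast : (u ∘ σ) (Fin.last n) = u i := by simp [σ]
  rw [← gramVol_comp_perm u σ, ← gramVol_comp_perm (Function.update u i x) σ, hupdate, ← hlast]
  exact abs_gramVol_sub_update_last_le (u ∘ σ) x fun j => hu _

theorem abs_gramVol_sub_le (u v : Fin m → EuclideanSpace ℝ (Fin d)) {r : ℝ}
    (hu : ∀ j, ‖u j‖ ≤ 1) (hv : ∀ j, ‖v j‖ ≤ 1) (huv : ∀ j, ‖u j - v j‖ ≤ r) :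
    |gramVol u - gramVol v| ≤ m * r := by
  classical
  suffices ∀ (s : Finset (Fin m)) (u : Fin m → EuclideanSpace ℝ (Fin d)), (∀ j, ‖u j‖ ≤ 1) →
      (∀ j, ‖u j - v j‖ ≤ r) → (∀ j ∉ s, u j = v j) → |gramVol u - gramVol v| ≤ s.card * r by
    simpa using this Finset.univ u hu huv (by simp)
  intro s
  induction s using Finset.induction_on with
  | empty =>
    intro u _ _ h
    rw [funext fun j => h j (Finset.notMem_empty j)]
    simp
  | insert i s hi ih =>
    intro u hu huv h
    have hr : 0 ≤ r := (norm_nonneg _).trans (huv i)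
    set u' := Function.update u i (v i)
    have hu'v : |gramVol u' - gramVol v| ≤ s.card * r := by
      refine ih u' (fun j => ?_) (fun j => ?_) (fun j hj => ?_) <;>
        rcases eq_or_ne j i with rfl | hji <;> simp_all [u']
    calc |gramVol u - gramVol v| ≤ |gramVol u - gramVol u'| + |gramVol u' - gramVol v| :=
          abs_sub_le _ _ _
      _ ≤ r + s.card * r :=
          add_le_add ((abs_gramVol_sub_update_le u i (v i) hu).trans (huv i)) hu'v
      _ = (insert i s).card * r := by rw [Finset.card_insert_of_notMem hi]; push_cast; ring

end GramVol

theorem Submodule.exists_le_finrank_eq {K V : Type*} [DivisionRing K] [AddCommGroup V]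
    [Module K V] [FiniteDimensional K V] (U : Submodule K V) {n : ℕ}
    (h₁ : Module.finrank K U ≤ n) (h₂ : n ≤ Module.finrank K V) :
    ∃ W : Submodule K V, U ≤ W ∧ Module.finrank K W = n := by
  obtain ⟨C, hC⟩ := U.exists_isCompl
  have hUC := Submodule.finrank_add_eq_of_isCompl hC
  obtain ⟨f, hf⟩ := exists_linearIndependent_of_le_finrank (R := K) (M := C)
    (n := n - Module.finrank K U) (by omega)
  set D := span K (range (C.subtype ∘ f))
  have hD : Module.finrank K D = n - Module.finrank K U :=
    (finrank_span_eq_card (hf.map' C.subtype C.ker_subtype)).trans (Fintype.card_fin _)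
  have hDC : D ≤ C := span_le.2 (range_subset_iff.2 fun i => (f i).2)
  have hUD : U ⊓ D = ⊥ := eq_bot_iff.2 ((inf_le_inf_left U hDC).trans hC.inf_eq_bot.le)
  refine ⟨U ⊔ D, le_sup_left, ?_⟩
  have := Submodule.finrank_sup_add_finrank_inf_eq U D
  rw [hUD, finrank_bot] at this
  omega

-- The first chosen vector is a unit vector, so only `n - 1` factors `δ` accumulate.
theorem exists_le_gramVol_or_card_le_two_mul_card_near_span {d : ℕ}
    (S : Finset (EuclideanSpace ℝ (Fin d))) (hS : ∀ e ∈ S, ‖e‖ = 1) {δ : ℝ} (hδ : 0 ≤ δ)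
    (n : ℕ) :
    (∃ w : Fin n → EuclideanSpace ℝ (Fin d), (∀ i, w i ∈ S) ∧ δ ^ (n - 1) ≤ gramVol w) ∨
      ∃ m < n, ∃ w : Fin m → EuclideanSpace ℝ (Fin d),
        S.card ≤ 2 * (S.filter fun e => infDist e (Submodule.span ℝ (range w)) ≤ δ).card := by
  induction n with
  | zero => exact Or.inl ⟨Fin.elim0, fun i => i.elim0, by simp [gramVol_fin_zero]⟩
  | succ n ih =>
    refine ih.elim (fun ⟨w, hwS, hw⟩ => ?_) fun ⟨m, hm, w, hw⟩ => Or.inr ⟨m, by omega, w, hw⟩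
    set T := S.filter fun e => infDist e (Submodule.span ℝ (range w)) ≤ δ
    by_cases hT : S.card ≤ 2 * T.card
    · exact Or.inr ⟨n, n.lt_succ_self, w, hT⟩
    obtain ⟨e, heS, heT⟩ := Finset.exists_mem_notMem_of_card_lt_card (s := T) (t := S) (by omega)
    have hfar : δ < infDist e (Submodule.span ℝ (range w)) := by simpa [T, heS] using heT
    refine Or.inl ⟨Fin.snoc w e, fun i => Fin.lastCases (by simpa using heS)
      (fun i => by simpa using hwS i) i, ?_⟩
    rw [gramVol_snoc]
    rcases n with _ | n
    · simp [gramVol_fin_zero, hS e heS]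
    · rw [Nat.add_sub_cancel, pow_succ]
      exact mul_le_mul hw hfar.le hδ (gramVol_nonneg _)

theorem sphCap_subset_of_infDist_le {d : ℕ} {e : EuclideanSpace ℝ (Fin d)} {r ρ : ℝ}
    {K H : Submodule ℝ (EuclideanSpace ℝ (Fin d))} (hKH : K ≤ H) (he : infDist e K ≤ ρ - r) :
    sphCap e r ⊆ {x | infDist x H ≤ ρ} := by
  rintro x ⟨-, hx⟩
  calc infDist x H ≤ infDist x K := infDist_le_infDist_of_subset hKH ⟨0, K.zero_mem⟩
    _ ≤ infDist e K + dist x e := infDist_le_infDist_add_dist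
    _ ≤ ρ := by rw [dist_eq_norm]; linarith

theorem pow_div_mul_le_self {ρ : ℝ} (hρ : ρ ∈ Ioo 0 1) {d : ℕ} (hd : d ≠ 0) :
    ρ ^ d / (1000 * d) ≤ ρ := by
  have : (1 : ℝ) ≤ d := Nat.one_le_cast.2 (Nat.one_le_iff_ne_zero.2 hd)
  calc ρ ^ d / (1000 * d) ≤ ρ ^ d := div_le_self (pow_nonneg hρ.1.le d) (by linarith)
    _ ≤ ρ := pow_le_of_le_one hρ.1.le hρ.2.le hd

theorem pow_div_two_le_sub_pow_sub {ρ : ℝ} (hρ : ρ ∈ Ioo 0 1) {k d : ℕ} (hkd : k + 1 ≤ d) :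
    ρ ^ k / 2 ≤ (ρ - ρ ^ d / (1000 * d)) ^ k - (k + 1) * (ρ ^ d / (1000 * d)) := by
  have hrρ := pow_div_mul_le_self hρ (d := d) (by omega)
  obtain ⟨hρ0, hρ1⟩ := hρ
  set r := ρ ^ d / (1000 * d)
  have hd : (k : ℝ) + 1 ≤ d := by exact_mod_cast hkd
  have hρd : ρ ^ d ≤ ρ ^ k := pow_le_pow_of_le_one hρ0.le hρ1.le (by omega)
  have hr0 : 0 ≤ r := by positivity
  have hdr : 2 * d * r = ρ ^ d / 500 := by
    have : (d : ℝ) ≠ 0 := Nat.cast_ne_zero.2 (by omega)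
    simp only [r]; field_simp; ring
  have hbernoulli : ρ ^ k - (ρ - r) ^ k ≤ k * r := by
    have hmax : max |ρ| |ρ - r| ^ (k - 1) ≤ 1 :=
      pow_le_one₀ (by positivity) (max_le (by rw [abs_le]; constructor <;> linarith)
        (by rw [abs_le]; constructor <;> linarith))
    calc ρ ^ k - (ρ - r) ^ k ≤ |ρ - (ρ - r)| * k * max |ρ| |ρ - r| ^ (k - 1) :=
          le_of_abs_le (abs_pow_sub_pow_le ρ (ρ - r) k)
      _ ≤ r * k * 1 := by rw [sub_sub_cancel, abs_of_nonneg hr0]; gcongr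
      _ = k * r := by ring
  have hkr : (2 * k + 1) * r ≤ 2 * d * r := by gcongr; linarith
  linarith [pow_pos hρ0 k]

theorem stmt_5 (d k : ℕ) (hk : 1 ≤ k) (hkd : k ≤ d - 1) (ρ : ℝ) (hρ : ρ ∈ Ioo (0 : ℝ) 1)
    (S : Finset (EuclideanSpace ℝ (Fin d))) (hS : ∀ e ∈ S, ‖e‖ = 1) :
    (∃ τ : Fin (k + 1) → EuclideanSpace ℝ (Fin d), (∀ j, τ j ∈ S) ∧
      ∀ u : Fin (k + 1) → EuclideanSpace ℝ (Fin d),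
        (∀ j, u j ∈ sphCap (τ j) (ρ ^ d / (1000 * d))) → ρ ^ k / 2 ≤ gramVol u) ∨
    (∃ H : Submodule ℝ (EuclideanSpace ℝ (Fin d)), Module.finrank ℝ H = k ∧
      (S.card : ℝ) ≤ 2 * ({e ∈ (S : Set (EuclideanSpace ℝ (Fin d))) |
        sphCap e (ρ ^ d / (1000 * d)) ⊆ {x | Metric.infDist x H ≤ ρ}}.ncard : ℝ)) := by
  classical
  set r := ρ ^ d / (1000 * d)
  have hkd' : k + 1 ≤ d := by omega
  have hr : 0 ≤ ρ - r := sub_nonneg.2 (pow_div_mul_le_self hρ (by omega))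
  rcases exists_le_gramVol_or_card_le_two_mul_card_near_span S hS hr (k + 1) with
    ⟨τ, hτS, hτ⟩ | ⟨m, hm, w, hw⟩
  · refine Or.inl ⟨τ, hτS, fun u hu => ?_⟩
    have hclose := abs_gramVol_sub_le u τ (fun j => (hu j).1.le) (fun j => (hS _ (hτS j)).le)
      fun j => (hu j).2
    have := pow_div_two_le_sub_pow_sub hρ hkd'
    rw [Nat.add_sub_cancel] at hτ
    push_cast at hclose
    linarith [(abs_le.1 hclose).1]
  · set K := Submodule.span ℝ (range w)
    obtain ⟨H, hKH, hH⟩ := K.exists_le_finrank_eq (n := k)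
      ((finrank_range_le_card w).trans (by simp; omega)) (by simp; omega)
    refine Or.inr ⟨H, hH, ?_⟩
    have hsub : ↑(S.filter fun e => infDist e K ≤ ρ - r) ⊆
        {e ∈ (S : Set (EuclideanSpace ℝ (Fin d))) | sphCap e r ⊆ {x | infDist x H ≤ ρ}} :=
      fun e he => ⟨(Finset.mem_filter.1 he).1,
        sphCap_subset_of_infDist_le hKH (Finset.mem_filter.1 he).2⟩
    have hcard := ncard_le_ncard hsub (S.finite_toSet.subset (sep_subset _ _))
    rw [ncard_coe_finset] at hcard
    calc (S.card : ℝ) ≤ 2 * (S.filter fun e => infDist e K ≤ ρ - r).card := by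
          exact_mod_cast hw
      _ ≤ _ := by gcongr
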